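/- Let u be a subharmonic function on ℂ such that u − log⁺|·| is bounded above on ℂ and u ≤ 0 on the closed unit disc. Then u(ζ) ≤ log|ζ| for all ζ ∈ ℂ with |ζ| ≥ 1. -/

import Mathlib

open Complex Metric Set MeasureTheory Filter Topology

noncomputable section

/-- Plurisubharmonicity of `u` on `S`: upper semicontinuity on `S` together with the
sub-mean value inequality over every circle bounding a closed complex disc contained in `S`. -/
def PshOn {E : Type*} [NormedAddCommGroup E] [NormedSpace ℂ E]
    (u : E → ℝ) (S : Set E) : Prop :=
  UpperSemicontinuousOn u S ∧
    ∀ a ∈ S, ∀ b : E, ∀ r : ℝ, 0 < r →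
      (∀ w : ℂ, ‖w‖ ≤ r → a + w • b ∈ S) →
      u a ≤ (2 * Real.pi)⁻¹ *
        ∫ θ in (0:ℝ)..(2 * Real.pi), u (a + ((r : ℂ) * Complex.exp (θ * Complex.I)) • b)

/-- Plurisubharmonic on the whole space. -/
def Psh {E : Type*} [NormedAddCommGroup E] [NormedSpace ℂ E] (u : E → ℝ) : Prop :=
  PshOn u Set.univ

/-- Minimal growth (Lelong class): `u - log⁺‖·‖` is bounded above. -/
def MinGrowth {E : Type*} [NormedAddCommGroup E] (u : E → ℝ) : Prop :=
  ∃ C : ℝ, ∀ z : E, u z - max (Real.log ‖z‖) 0 ≤ C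

/-- The Siciak-Zahariuta extremal function of `X ⊆ ℂⁿ`. -/
def SZ {n : ℕ} (X : Set (EuclideanSpace ℂ (Fin n))) (z : EuclideanSpace ℂ (Fin n)) : EReal :=
  ⨆ u ∈ {u : EuclideanSpace ℂ (Fin n) → ℝ | Psh u ∧ MinGrowth u ∧ ∀ x ∈ X, u x ≤ 0},
    (u z : EReal)


/-!
For `c > 1` the function `u - c log ‖·‖` is subharmonic on the annulus `1 ≤ ‖z‖ ≤ R`, it is `≤ 0`
on the inner circle by hypothesis and on the outer circle once `R` is large, by minimal growth.
The maximum principle makes it `≤ 0` on the whole annulus; letting `c → 1` gives the bound.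

The maximum principle is proved directly: if the maximum `M` of `w` were positive, take a point
`a` of maximal real part in the compact set `{w = M}`. On a small circle around `a`, `w ≤ M`
everywhere and `w < M` on the arc where the real part exceeds `a.re`, so the circle average of
`w` is `< M = w a`, contradicting the sub-mean-value inequality.
-/

open Real

theorem PshOn.le_circleAverage {u : ℂ → ℝ} {S : Set ℂ} (hu : PshOn u S) {a : ℂ} (ha : a ∈ S)
    {r : ℝ} (hr : 0 < r) (hS : closedBall a r ⊆ S) : u a ≤ circleAverage u a r := by
  have := hu.2 a ha 1 r hr fun w hw ↦ hS (by simpa [dist_eq_norm] using hw)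
  simpa [circleAverage_def, circleMap] using this

theorem circleAverage_log_norm_of_le {c : ℂ} {r : ℝ} (hr : 0 < r) (hrc : r ≤ ‖c‖) :
    circleAverage (fun z ↦ Real.log ‖z‖) c r = Real.log ‖c‖ := by
  have h := circleAverage_log_norm_sub_const_eq_log_radius_add_posLog (a := 0) (c := c) hr.ne'
  simp only [sub_zero] at h
  have h1 : 1 ≤ r⁻¹ * ‖c‖ := by rwa [le_inv_mul_iff₀ hr, mul_one]
  rw [h, posLog_eq_log (by rwa [abs_of_nonneg (zero_le_one.trans h1)]),
    Real.log_mul (inv_ne_zero hr.ne') (hr.trans_le hrc).ne', Real.log_inv]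
  ring

theorem le_circleAverage_sub_mul_log_norm {u : ℂ → ℝ} {a : ℂ} {r : ℝ} (c : ℝ) (hr : 0 < r)
    (hra : r ≤ ‖a‖) (hu : u a ≤ circleAverage u a r) (hua : 0 < u a) :
    u a - c * Real.log ‖a‖ ≤ circleAverage (fun z ↦ u z - c * Real.log ‖z‖) a r := by
  have hint : CircleIntegrable u a r := by
    by_contra h
    rw [circleAverage.integral_undef h] at hu
    linarith
  have hlog : CircleIntegrable (fun z ↦ c * Real.log ‖z‖) a r := by
    simpa [CircleIntegrable] using
      (circleIntegrable_log_norm_sub_const (a := 0) (c := a) r).const_mul c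
  have hsmul := circleAverage_fun_smul (a := c) (f := fun z ↦ Real.log ‖z‖) (c := a) (R := r)
  simp only [smul_eq_mul] at hsmul
  rw [circleAverage_fun_sub hint hlog, hsmul, circleAverage_log_norm_of_le hr hra]
  linarith

theorem circleAverage_lt_of_le_of_lt_on {f : ℂ → ℝ} {c : ℂ} {R M t₁ t₂ : ℝ}
    (hf : CircleIntegrable f c R) (hle : ∀ z ∈ sphere c |R|, f z ≤ M) (ht₁ : 0 ≤ t₁)
    (ht : t₁ < t₂) (ht₂ : t₂ ≤ 2 * π) (hlt : ∀ θ ∈ Ioo t₁ t₂, f (circleMap c R θ) < M) :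
    circleAverage f c R < M := by
  rw [← circleAverage_const M c R, circleAverage_def, circleAverage_def, smul_eq_mul, smul_eq_mul,
    mul_lt_mul_iff_of_pos_left (inv_pos.2 two_pi_pos)]
  refine intervalIntegral.integral_lt_integral_of_ae_le_of_measure_setOfPred_lt_ne_zero
    two_pi_pos.le hf intervalIntegrable_const
    (ae_of_all _ fun θ ↦ hle _ (circleMap_mem_sphere' c R θ)) ?_
  rw [Measure.restrict_apply' measurableSet_Ioc, ← pos_iff_ne_zero]
  refine (show 0 < volume (Ioo t₁ t₂) by simpa using ht).trans_le (measure_mono ?_)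
  exact fun θ hθ ↦ ⟨hlt θ hθ, by linarith [hθ.1], by linarith [hθ.2]⟩

theorem IsCompact.le_zero_of_le_circleAverage {K : Set ℂ} {w : ℂ → ℝ} (hK : IsCompact K)
    (hw : UpperSemicontinuousOn w K)
    (hsub : ∀ a ∈ K, 0 < w a → ∃ r > 0, sphere a r ⊆ K ∧ w a ≤ circleAverage w a r) :
    ∀ z ∈ K, w z ≤ 0 := by
  intro z hz
  by_contra! hwz
  obtain ⟨a₀, ha₀, hmax⟩ := hw.exists_isMaxOn ⟨z, hz⟩ hK
  obtain ⟨a, ⟨haK, haM⟩, hre⟩ := (hw.isCompact_inter_preimage_Ici hK (w a₀)).exists_isMaxOn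
    ⟨a₀, ha₀, by simp⟩ continuous_re.continuousOn
  have hwa : w a = w a₀ := le_antisymm (hmax haK) haM
  have hpos : 0 < w a := hwa ▸ hwz.trans_le (hmax hz)
  obtain ⟨r, hr, hsph, hmean⟩ := hsub a haK hpos
  -- a non-integrable circle has average `0`, which `0 < w a` rules out
  have hint : CircleIntegrable w a r := by
    by_contra h
    rw [circleAverage.integral_undef h] at hmean
    linarith
  have hsph' : ∀ θ, circleMap a r θ ∈ K := fun θ ↦ hsph (circleMap_mem_sphere a hr.le θ)
  have hlt : ∀ θ ∈ Ioo 0 (π / 2), w (circleMap a r θ) < w a₀ := by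
    intro θ hθ
    by_contra! hge
    have hcos : 0 < Real.cos θ := Real.cos_pos_of_mem_Ioo ⟨by linarith [hθ.1, pi_pos], hθ.2⟩
    have := hre ⟨hsph' θ, hge⟩
    simp only [circleMap, mem_ofPred_eq, add_re, mul_re, ofReal_re, exp_ofReal_mul_I_re,
      ofReal_im, exp_ofReal_mul_I_im, zero_mul, sub_zero, add_le_iff_nonpos_right] at this
    exact (mul_pos hr hcos).not_ge this
  have := circleAverage_lt_of_le_of_lt_on hint
    (fun y hy ↦ hmax (hsph (by rwa [abs_of_pos hr] at hy))) le_rfl (by positivity)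
    (by linarith [pi_pos]) hlt
  linarith

theorem PshOn.le_mul_log_norm {u : ℂ → ℝ} (hu : PshOn u univ) (hgrowth : MinGrowth u)
    (hbd : ∀ z ∈ closedBall (0 : ℂ) 1, u z ≤ 0) {c : ℝ} (hc : 1 < c) {ζ : ℂ} (hζ : 1 ≤ ‖ζ‖) :
    u ζ ≤ c * Real.log ‖ζ‖ := by
  obtain ⟨C, hC⟩ := hgrowth
  set R := max ‖ζ‖ (Real.exp (C / (c - 1)))
  have hCR : C ≤ (c - 1) * Real.log R := by
    rw [mul_comm, ← div_le_iff₀ (by linarith), Real.le_log_iff_exp_le (by positivity)]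
    exact le_max_right _ _
  set K := {z : ℂ | 1 ≤ ‖z‖ ∧ ‖z‖ ≤ R}
  have hK : IsCompact K := (isCompact_closedBall (0 : ℂ) R).of_isClosed_subset
    ((isClosed_le continuous_const continuous_norm).inter
      (isClosed_le continuous_norm continuous_const))
    fun z hz ↦ mem_closedBall_zero_iff.2 hz.2
  have hw : UpperSemicontinuousOn (fun z ↦ u z - c * Real.log ‖z‖) K := by
    have hlog : ContinuousOn (fun z : ℂ ↦ -(c * Real.log ‖z‖)) K :=
      ((continuous_norm.continuousOn.log fun _ hz ↦
        (zero_lt_one.trans_le hz.1).ne').const_smul c).neg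
    simpa [sub_eq_add_neg] using (hu.1.mono (subset_univ K)).add hlog.upperSemicontinuousOn
  refine sub_nonpos.1 (hK.le_zero_of_le_circleAverage hw ?_ ζ ⟨hζ, le_max_left _ _⟩)
  rintro a ⟨ha1, haR⟩ hwa
  have hlog : 0 ≤ Real.log ‖a‖ := Real.log_nonneg ha1
  have ha1' : 1 < ‖a‖ := by
    refine ha1.lt_of_ne fun h ↦ ?_
    have := hbd a (mem_closedBall_zero_iff.2 h.ge)
    simp only [← h, Real.log_one] at hwa
    linarith
  have haR' : ‖a‖ < R := by
    refine haR.lt_of_ne fun h ↦ ?_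
    have := hC a
    rw [h, max_eq_left (Real.log_nonneg (ha1.trans haR))] at this
    simp only [h] at hwa
    nlinarith
  set r := min (‖a‖ - 1) (R - ‖a‖)
  have hr : 0 < r := lt_min (by linarith) (by linarith)
  refine ⟨r, hr, fun z hz ↦ ?_, le_circleAverage_sub_mul_log_norm c hr
    ((min_le_left _ _).trans (by linarith))
    (hu.le_circleAverage (mem_univ a) hr (subset_univ _)) (by nlinarith)⟩
  rw [mem_sphere_iff_norm] at hz
  constructor
  · linarith [norm_sub_norm_le a z, norm_sub_rev a z, min_le_left (‖a‖ - 1) (R - ‖a‖)]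
  · linarith [norm_sub_norm_le z a, min_le_right (‖a‖ - 1) (R - ‖a‖)]

/-- A subharmonic function on `ℂ` of minimal growth which is `≤ 0` on the closed unit disc
satisfies `u ζ ≤ log |ζ|` for `|ζ| ≥ 1`. -/
theorem subharmonic_minimal_growth_bound (u : ℂ → ℝ)
    (hu : PshOn u Set.univ) (hgrowth : MinGrowth u)
    (hbd : ∀ ζ ∈ closedBall (0:ℂ) 1, u ζ ≤ 0) :
    ∀ ζ : ℂ, 1 ≤ ‖ζ‖ → u ζ ≤ Real.log ‖ζ‖ := by
  intro ζ hζ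
  have hlim : Tendsto (fun c : ℝ ↦ c * Real.log ‖ζ‖) (𝓝[>] 1) (𝓝 (Real.log ‖ζ‖)) := by
    simpa using ((continuous_mul_const (Real.log ‖ζ‖)).tendsto 1).mono_left nhdsWithin_le_nhds
  exact ge_of_tendsto hlim
    (eventually_nhdsWithin_of_forall fun c hc ↦ hu.le_mul_log_norm hgrowth hbd hc hζ)
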